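/- Under the same hypotheses as the previous statement, define $\mathcal{HC}_r = \{y \in \mathcal{HC} : z \cdot y > m + \beta(M - m)\}$, and assume $\mathcal{HC}_r$ is nonempty. Then with $\epsilon = 8 \sin(\theta/2)\sqrt{d}$: $\sup_{y \in \mathcal{HC}_r} e \cdot y - \inf_{y \in \mathcal{HC}_r} e \cdot y \le L(1 - \beta + \epsilon)$. -/

import Mathlib

/-!
Write a point of the cube as `y = w + ∑ fᵢ vᵢ` with `f ∈ [0,1]^d` and put `aᵢ = ⟪vᵢ, z⟫`.
The linear form `⟪·, z⟫` ranges over `[m, M]` with `M - m = ∑ |aᵢ|`, and on the cube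
`⟪y, z⟫ - m = ∑ (fᵢ aᵢ - min aᵢ 0)`, each summand being at most `|aᵢ|`. Hence a point of the
upper cut satisfies `(β - f₀) a₀ < ∑_{i ≠ 0} |aᵢ|`. Since `z` is close to the edge direction `e`,
Bessel's inequality for the orthonormal family `vᵢ / L` and Cauchy–Schwarz bound the off-axis
mass by `L √d ‖z - e‖ ≤ 2 L √d sin (θ/2)`, while `a₀ = L ⟪z, e⟫ ≥ L cos θ`. Either `ε ≥ 1` and
there is nothing to prove, or `θ` is small, `cos θ > 1/4`, and `f₀ ≥ β - ε`. As
`⟪e, y⟫ = ⟪e, w⟫ + L f₀`, the values of `⟪e, ·⟫` on the cut lie in an interval of length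
`L (1 - β + ε)`.
-/

open scoped RealInnerProductSpace
open Finset Real

lemma mul_le_max_zero {f : ℝ} (hf : f ∈ Set.Icc (0:ℝ) 1) (a : ℝ) : f * a ≤ max a 0 := by
  rcases le_total 0 a with ha | ha
  · exact (mul_le_of_le_one_left ha hf.2).trans (le_max_left _ _)
  · exact (mul_nonpos_of_nonneg_of_nonpos hf.1 ha).trans (le_max_right _ _)

lemma min_zero_le_mul {f : ℝ} (hf : f ∈ Set.Icc (0:ℝ) 1) (a : ℝ) : min a 0 ≤ f * a := by
  rcases le_total 0 a with ha | ha
  · exact (min_le_right _ _).trans (mul_nonneg hf.1 ha)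
  · exact (min_le_left _ _).trans (by nlinarith [hf.2])

lemma mul_sub_min_zero_le_abs {f : ℝ} (hf : f ∈ Set.Icc (0:ℝ) 1) (a : ℝ) :
    f * a - min a 0 ≤ |a| := by
  have hwidth : max a 0 - min a 0 = |a| := by rw [max_sub_min_eq_abs', sub_zero]
  linarith [mul_le_max_zero hf a]

lemma sub_mul_lt_sum_abs_erase {ι : Type*} [Fintype ι] [DecidableEq ι] {a f : ι → ℝ}
    (hf : ∀ i, f i ∈ Set.Icc (0:ℝ) 1) {β : ℝ} (hβ : 0 ≤ β) {j : ι} (hj : 0 ≤ a j)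
    (h : ∑ i, min (a i) 0 + β * (∑ i, max (a i) 0 - ∑ i, min (a i) 0) < ∑ i, f i * a i) :
    (β - f j) * a j < ∑ i ∈ univ.erase j, |a i| := by
  have hwidth : ∑ i, max (a i) 0 - ∑ i, min (a i) 0 = a j + ∑ i ∈ univ.erase j, |a i| := by
    rw [← sum_sub_distrib, ← add_sum_erase _ _ (mem_univ j)]
    simp only [max_sub_min_eq_abs', sub_zero, abs_of_nonneg hj]
  have hexcess : ∑ i, f i * a i - ∑ i, min (a i) 0 ≤ f j * a j + ∑ i ∈ univ.erase j, |a i| := by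
    rw [← sum_sub_distrib, ← add_sum_erase _ _ (mem_univ j), min_eq_right hj, sub_zero]
    gcongr with i
    exact mul_sub_min_zero_le_abs (hf i) (a i)
  have hS : 0 ≤ β * ∑ i ∈ univ.erase j, |a i| :=
    mul_nonneg hβ (sum_nonneg fun _ _ => abs_nonneg _)
  rw [hwidth] at h
  nlinarith

lemma sub_le_eight_mul_of_mul_lt {β f c s k : ℝ} (hf : 0 ≤ f) (hβ : β ≤ 1) (hs : 0 ≤ s)
    (hk : 1 ≤ k) (hc : 1 - 2 * s ^ 2 ≤ c) (h : (β - f) * c < 2 * s * k) :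
    β - 8 * s * k ≤ f := by
  by_contra! hlt
  have hs8 : 8 * s < 1 := by nlinarith
  have hc4 : 1 / 4 ≤ c := by nlinarith
  nlinarith [mul_le_mul_of_nonneg_left hc4 (by nlinarith : 0 ≤ β - f)]

lemma cos_eq_one_sub_two_mul_sin_half_sq (θ : ℝ) : cos θ = 1 - 2 * sin (θ / 2) ^ 2 := by
  have h := cos_two_mul' (θ / 2)
  rw [mul_div_cancel₀ θ two_ne_zero] at h
  linarith [cos_sq_add_sin_sq (θ / 2)]

section InnerProductSpace

variable {E ι : Type*} [NormedAddCommGroup E] [InnerProductSpace ℝ E]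

lemma norm_sub_le_two_mul_sin_half {z e : E} (hz : ‖z‖ = 1) (he : ‖e‖ = 1) {θ : ℝ}
    (hθ0 : 0 ≤ θ) (hθ : θ ≤ 2 * π) (h : cos θ ≤ ⟪z, e⟫) : ‖z - e‖ ≤ 2 * sin (θ / 2) := by
  have hsin : 0 ≤ sin (θ / 2) := sin_nonneg_of_nonneg_of_le_pi (by linarith) (by linarith)
  refine (pow_le_pow_iff_left₀ (norm_nonneg _) (by positivity) two_ne_zero).1 ?_
  rw [norm_sub_sq_real, hz, he]
  rw [cos_eq_one_sub_two_mul_sin_half_sq] at h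
  nlinarith

lemma Orthonormal.sum_abs_inner_le {u : ι → E} (hu : Orthonormal ℝ u) (s : Finset ι) (x : E) :
    ∑ i ∈ s, |⟪u i, x⟫| ≤ √(#s) * ‖x‖ := by
  have hbessel : ∑ i ∈ s, |⟪u i, x⟫| ^ 2 ≤ ‖x‖ ^ 2 := by
    simpa only [Real.norm_eq_abs] using hu.sum_inner_products_le x
  calc ∑ i ∈ s, |⟪u i, x⟫| = ∑ i ∈ s, 1 * |⟪u i, x⟫| := by simp only [one_mul]
    _ ≤ √(∑ i ∈ s, 1 ^ 2) * √(∑ i ∈ s, |⟪u i, x⟫| ^ 2) := sum_mul_le_sqrt_mul_sqrt _ _ _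
    _ ≤ √(#s) * ‖x‖ := by
      rw [← sqrt_sq (norm_nonneg x)]
      simp only [one_pow, sum_const, nsmul_eq_mul, mul_one]
      gcongr

lemma Orthonormal.sum_abs_inner_erase_le [Fintype ι] [DecidableEq ι] {u : ι → E}
    (hu : Orthonormal ℝ u) (j : ι) (x : E) :
    ∑ i ∈ univ.erase j, |⟪u i, x⟫| ≤ √(Fintype.card ι) * ‖x - u j‖ := by
  calc ∑ i ∈ univ.erase j, |⟪u i, x⟫| = ∑ i ∈ univ.erase j, |⟪u i, x - u j⟫| := by
        refine sum_congr rfl fun i hi => ?_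
        rw [inner_sub_right, hu.2 (ne_of_mem_erase hi), sub_zero]
    _ ≤ √(#(univ.erase j)) * ‖x - u j‖ := hu.sum_abs_inner_le _ _
    _ ≤ √(Fintype.card ι) * ‖x - u j‖ := by
      gcongr
      exact card_erase_le

end InnerProductSpace

section ScaledOrthonormal

variable {E ι : Type*} [NormedAddCommGroup E] [InnerProductSpace ℝ E] {v : ι → E} {L : ℝ}

lemma orthonormal_one_div_smul (hL : 0 < L) (horth : ∀ i j, i ≠ j → ⟪v i, v j⟫ = 0)
    (hlen : ∀ i, ‖v i‖ = L) : Orthonormal ℝ (fun i => (1 / L) • v i) := by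
  refine ⟨fun i => ?_, fun i j hij => ?_⟩
  · rw [norm_smul, hlen, Real.norm_of_nonneg (by positivity), one_div_mul_cancel hL.ne']
  · simp only [real_inner_smul_left, real_inner_smul_right, horth i j hij, mul_zero]

variable [Fintype ι]

lemma inner_one_div_smul_add_sum_smul (hL : 0 < L) (horth : ∀ i j, i ≠ j → ⟪v i, v j⟫ = 0)
    (hlen : ∀ i, ‖v i‖ = L) (w : E) (f : ι → ℝ) (j : ι) :
    ⟪(1 / L) • v j, w + ∑ i, f i • v i⟫ = ⟪(1 / L) • v j, w⟫ + L * f j := by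
  have hsum : ∑ i, f i • v i = ∑ i, (f i * L) • (1 / L) • v i := by
    simp only [mul_smul, smul_smul L, mul_one_div_cancel hL.ne', one_smul]
  rw [inner_add_right, hsum, (orthonormal_one_div_smul hL horth hlen).inner_right_fintype,
    mul_comm]

lemma sum_abs_inner_erase_le [DecidableEq ι] (hL : 0 < L)
    (horth : ∀ i j, i ≠ j → ⟪v i, v j⟫ = 0) (hlen : ∀ i, ‖v i‖ = L) (j : ι) (z : E) :
    ∑ i ∈ univ.erase j, |⟪v i, z⟫| ≤ L * (√(Fintype.card ι) * ‖z - (1 / L) • v j‖) := by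
  have hscale : ∀ i, |⟪v i, z⟫| = L * |⟪(1 / L) • v i, z⟫| := fun i => by
    rw [real_inner_smul_left, abs_mul, abs_of_pos (one_div_pos.2 hL), ← mul_assoc,
      mul_one_div_cancel hL.ne', one_mul]
  simp only [hscale, ← mul_sum]
  gcongr
  exact (orthonormal_one_div_smul hL horth hlen).sum_abs_inner_erase_le j z

end ScaledOrthonormal

section Parallelotope

variable {E ι : Type*} [NormedAddCommGroup E] [InnerProductSpace ℝ E] [Fintype ι]

def parallelotope (w : E) (v : ι → E) : Set E :=
  {p | ∃ f : ι → ℝ, (∀ i, f i ∈ Set.Icc (0:ℝ) 1) ∧ p = w + ∑ i, f i • v i}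

lemma inner_add_sum_smul_left (w : E) (v : ι → E) (f : ι → ℝ) (z : E) :
    ⟪w + ∑ i, f i • v i, z⟫ = ⟪w, z⟫ + ∑ i, f i * ⟪v i, z⟫ := by
  simp only [inner_add_left, sum_inner, real_inner_smul_left]

lemma isGreatest_inner_parallelotope (w : E) (v : ι → E) (z : E) :
    IsGreatest ((fun y => ⟪y, z⟫) '' parallelotope w v) (⟪w, z⟫ + ∑ i, max ⟪v i, z⟫ 0) := by
  classical
  refine ⟨⟨_, ⟨fun i => if 0 ≤ ⟪v i, z⟫ then 1 else 0, fun i => ?_, rfl⟩, ?_⟩, ?_⟩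
  · dsimp only
    split_ifs <;> simp
  · simp only [inner_add_sum_smul_left]
    congr 1
    refine sum_congr rfl fun i _ => ?_
    split_ifs with h
    · simp [h]
    · simp [(not_le.1 h).le]
  · rintro _ ⟨_, ⟨f, hf, rfl⟩, rfl⟩
    simp only [inner_add_sum_smul_left]
    gcongr with i
    exact mul_le_max_zero (hf i) _

lemma isLeast_inner_parallelotope (w : E) (v : ι → E) (z : E) :
    IsLeast ((fun y => ⟪y, z⟫) '' parallelotope w v) (⟪w, z⟫ + ∑ i, min ⟪v i, z⟫ 0) := by
  classical
  refine ⟨⟨_, ⟨fun i => if 0 ≤ ⟪v i, z⟫ then 0 else 1, fun i => ?_, rfl⟩, ?_⟩, ?_⟩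
  · dsimp only
    split_ifs <;> simp
  · simp only [inner_add_sum_smul_left]
    congr 1
    refine sum_congr rfl fun i _ => ?_
    split_ifs with h
    · simp [h]
    · simp [(not_le.1 h).le]
  · rintro _ ⟨_, ⟨f, hf, rfl⟩, rfl⟩
    simp only [inner_add_sum_smul_left]
    gcongr with i
    exact min_zero_le_mul (hf i) _

lemma sub_mul_lt_sum_abs_erase_of_cut_lt [DecidableEq ι] {w z : E} {v : ι → E} {f : ι → ℝ}
    (hf : ∀ i, f i ∈ Set.Icc (0:ℝ) 1) {β : ℝ} (hβ : 0 ≤ β) {j : ι} (hj : 0 ≤ ⟪v j, z⟫)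
    (hcut : sInf ((fun y => ⟪y, z⟫) '' parallelotope w v) + β *
      (sSup ((fun y => ⟪y, z⟫) '' parallelotope w v) -
        sInf ((fun y => ⟪y, z⟫) '' parallelotope w v)) < ⟪z, w + ∑ i, f i • v i⟫) :
    (β - f j) * ⟪v j, z⟫ < ∑ i ∈ univ.erase j, |⟪v i, z⟫| := by
  rw [(isLeast_inner_parallelotope w v z).csInf_eq,
    (isGreatest_inner_parallelotope w v z).csSup_eq, real_inner_comm _ z,
    inner_add_sum_smul_left] at hcut
  exact sub_mul_lt_sum_abs_erase hf hβ hj (by linarith)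

end Parallelotope

theorem cut_lemma_right
    (D d : ℕ) (L : ℝ) (hL : 0 < L)
    (w : EuclideanSpace ℝ (Fin D)) (v : Fin d → EuclideanSpace ℝ (Fin D))
    (horth : ∀ i j, i ≠ j → ⟪v i, v j⟫ = 0)
    (hlen : ∀ i, ‖v i‖ = L) (hd : 0 < d)
    (HC : Set (EuclideanSpace ℝ (Fin D)))
    (hHC : HC = {p | ∃ f : Fin d → ℝ, (∀ i, f i ∈ Set.Icc (0:ℝ) 1) ∧
      p = w + ∑ i, f i • v i})
    (e : EuclideanSpace ℝ (Fin D)) (he : e = (1 / L) • v ⟨0, hd⟩)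
    (z : EuclideanSpace ℝ (Fin D)) (hz : ‖z‖ = 1)
    (θ : ℝ) (hθ0 : 0 < θ) (hθ1 : θ < Real.pi / 2)
    (hangle : Real.cos θ ≤ ⟪z, e⟫)
    (β : ℝ) (hβ0 : 0 < β) (hβ1 : β < 1)
    (m M : ℝ)
    (hm : m = sInf ((fun y => ⟪y, z⟫) '' HC))
    (hM : M = sSup ((fun y => ⟪y, z⟫) '' HC))
    (HCr : Set (EuclideanSpace ℝ (Fin D)))
    (hHCr : HCr = {y ∈ HC | m + β * (M - m) < ⟪z, y⟫})
    (hne : HCr.Nonempty)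
    (ε : ℝ) (hε : ε = 8 * Real.sin (θ / 2) * Real.sqrt d) :
    sSup ((fun y => ⟪e, y⟫) '' HCr) - sInf ((fun y => ⟪e, y⟫) '' HCr)
      ≤ L * (1 - β + ε) := by
  set j : Fin d := ⟨0, hd⟩
  have hvj : ⟪v j, z⟫ = L * ⟪z, e⟫ := by
    rw [he, real_inner_smul_right, ← mul_assoc, mul_one_div_cancel hL.ne', one_mul,
      real_inner_comm]
  have hj : 0 ≤ ⟪v j, z⟫ :=
    hvj ▸ mul_nonneg hL.le ((cos_nonneg_of_mem_Icc ⟨by linarith, hθ1.le⟩).trans hangle)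
  have hsin : 0 ≤ sin (θ / 2) := sin_nonneg_of_nonneg_of_le_pi (by linarith) (by linarith)
  have hze : ‖z - e‖ ≤ 2 * sin (θ / 2) :=
    norm_sub_le_two_mul_sin_half hz (he ▸ (orthonormal_one_div_smul hL horth hlen).1 j)
      hθ0.le (by linarith [pi_pos]) hangle
  have hoff : ∑ i ∈ univ.erase j, |⟪v i, z⟫| ≤ L * (√d * (2 * sin (θ / 2))) := by
    grw [sum_abs_inner_erase_le hL horth hlen j z, ← he, hze, Fintype.card_fin]
  have hbounds : ∀ y ∈ HCr, ⟪e, w⟫ + L * (β - ε) ≤ ⟪e, y⟫ ∧ ⟪e, y⟫ ≤ ⟪e, w⟫ + L := by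
    rw [hHCr, hHC]
    rintro _ ⟨⟨f, hf, rfl⟩, hcut⟩
    rw [hm, hM, hHC] at hcut
    have hlt := sub_mul_lt_sum_abs_erase_of_cut_lt hf hβ0.le hj hcut
    have hfj : β - ε ≤ f j := by
      rw [hε]
      refine sub_le_eight_mul_of_mul_lt (hf j).1 hβ1.le hsin
        (one_le_sqrt.2 (by exact_mod_cast hd)) (cos_eq_one_sub_two_mul_sin_half_sq θ ▸ hangle) ?_
      refine lt_of_mul_lt_mul_left ?_ hL.le
      rw [hvj] at hlt
      linarith
    rw [he, inner_one_div_smul_add_sum_smul hL horth hlen, ← he]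
    constructor <;> nlinarith [(hf j).2]
  have hne' := hne.image (fun y => ⟪e, y⟫)
  have hsup := csSup_le hne' (by rintro _ ⟨y, hy, rfl⟩; exact (hbounds y hy).2)
  have hinf := le_csInf hne' (by rintro _ ⟨y, hy, rfl⟩; exact (hbounds y hy).1)
  linarith
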